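/- arXiv:0902.0462 — 2 statements merged into one kernel-verified Lean document; each statement's English description precedes it below -/
import Mathlib

section
/- For every unit vector u ∈ ℝ^d, the Steiner symmetrization S_u is 1-Lipschitz with respect to the Nikodym distance: for all bounded measurable sets A, B ⊆ ℝ^d one has λ_d(S_uA △ S_uB) ≤ λ_d(A △ B). -/
open MeasureTheory Metric Filter
open scoped symmDiff ENNReal

section SteinerAux

open Set

private lemma steiner_J_volume (a : ℝ≥0∞) (ha : a ≠ ∞) :
    volume {s : ℝ | ENNReal.ofReal (2 * |s|) ≤ a ∧ 0 < a} = a := by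
  rcases eq_or_lt_of_le (zero_le : (0:ℝ≥0∞) ≤ a) with h0 | h0
  · simp [← h0]
  · have h : {s : ℝ | ENNReal.ofReal (2 * |s|) ≤ a ∧ 0 < a}
        = Set.Icc (-(a.toReal / 2)) (a.toReal / 2) := by
      ext s
      simp only [Set.mem_setOf_eq, Set.mem_Icc, h0, and_true]
      rw [ENNReal.ofReal_le_iff_le_toReal ha, ← abs_le]
      constructor <;> intro h <;> [linarith [abs_nonneg s]; linarith]
    rw [h, Real.volume_Icc,
      show a.toReal / 2 - -(a.toReal / 2) = a.toReal by ring, ENNReal.ofReal_toReal ha]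

private lemma steiner_J_meas (a : ℝ≥0∞) :
    MeasurableSet {s : ℝ | ENNReal.ofReal (2 * |s|) ≤ a ∧ 0 < a} := by
  have h : {s : ℝ | ENNReal.ofReal (2 * |s|) ≤ a ∧ 0 < a}
      = {s : ℝ | ENNReal.ofReal (2 * |s|) ≤ a} ∩ {_s : ℝ | 0 < a} := rfl
  rw [h]
  refine (measurableSet_le (by measurability) measurable_const).inter ?_
  by_cases h : 0 < a <;> simp [h]

private lemma steiner_J_mono {a b : ℝ≥0∞} (hab : a ≤ b) :
    {s : ℝ | ENNReal.ofReal (2 * |s|) ≤ a ∧ 0 < a} ⊆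
      {s : ℝ | ENNReal.ofReal (2 * |s|) ≤ b ∧ 0 < b} :=
  fun s hs => ⟨hs.1.trans hab, lt_of_lt_of_le hs.2 hab⟩

private lemma steiner_J_diff {a b : ℝ≥0∞} (hab : a ≤ b) :
    volume ({s : ℝ | ENNReal.ofReal (2 * |s|) ≤ b ∧ 0 < b} \
      {s : ℝ | ENNReal.ofReal (2 * |s|) ≤ a ∧ 0 < a}) ≤ b - a := by
  rcases eq_or_ne b ∞ with rfl | hb
  · rcases eq_or_ne a ∞ with rfl | ha
    · simp
    · rw [ENNReal.top_sub ha]; exact le_top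
  · have ha : a ≠ ∞ := (hab.trans_lt hb.lt_top).ne
    rw [measure_diff (steiner_J_mono hab) (steiner_J_meas a).nullMeasurableSet
        (by rw [steiner_J_volume a ha]; exact ha),
      steiner_J_volume a ha, steiner_J_volume b hb]

private lemma steiner_J_symmDiff (a b : ℝ≥0∞) :
    volume ({s : ℝ | ENNReal.ofReal (2 * |s|) ≤ a ∧ 0 < a} ∆
      {s : ℝ | ENNReal.ofReal (2 * |s|) ≤ b ∧ 0 < b}) ≤ (a - b) + (b - a) := by
  rcases le_total a b with hab | hab
  · rw [symmDiff_of_le (steiner_J_mono hab)]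
    exact (steiner_J_diff hab).trans le_add_self
  · rw [symmDiff_of_ge (steiner_J_mono hab)]
    exact (steiner_J_diff hab).trans le_self_add

private lemma steiner_vol_sub_le (S T : Set ℝ) : volume S - volume T ≤ volume (S \ T) := by
  rw [tsub_le_iff_right]
  calc volume S ≤ volume ((S \ T) ∪ T) := measure_mono (fun x hx => by
        by_cases h : x ∈ T
        · exact Or.inr h
        · exact Or.inl ⟨hx, h⟩)
    _ ≤ volume (S \ T) + volume T := measure_union_le _ _

private lemma steiner_prod_le {n : ℕ} (C D : Set (ℝ × (Fin n → ℝ)))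
    (hC : MeasurableSet C) (hD : MeasurableSet D) :
    volume ({p : ℝ × (Fin n → ℝ) | {t : ℝ | (t, p.2) ∈ C}.Nonempty ∧
        ENNReal.ofReal (2 * |p.1|) ≤ volume {t : ℝ | (t, p.2) ∈ C}} ∆
      {p : ℝ × (Fin n → ℝ) | {t : ℝ | (t, p.2) ∈ D}.Nonempty ∧
        ENNReal.ofReal (2 * |p.1|) ≤ volume {t : ℝ | (t, p.2) ∈ D}})
      ≤ volume (C ∆ D) := by
  set F : Set (ℝ × (Fin n → ℝ)) → (Fin n → ℝ) → ℝ≥0∞ :=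
    fun E y => volume {t : ℝ | (t, y) ∈ E} with hF
  set SC : Set (ℝ × (Fin n → ℝ)) → Set (ℝ × (Fin n → ℝ)) := fun E =>
    {p | {t : ℝ | (t, p.2) ∈ E}.Nonempty ∧ ENNReal.ofReal (2 * |p.1|) ≤ F E p.2} with hSC
  set Spos : Set (ℝ × (Fin n → ℝ)) → Set (ℝ × (Fin n → ℝ)) := fun E =>
    {p | ENNReal.ofReal (2 * |p.1|) ≤ F E p.2 ∧ 0 < F E p.2} with hSpos
  have hFmeas : ∀ E : Set (ℝ × (Fin n → ℝ)), MeasurableSet E → Measurable (F E) :=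
    fun E hE => measurable_measure_prodMk_right hE
  have hSposMeas : ∀ E, MeasurableSet E → MeasurableSet (Spos E) := by
    intro E hE
    have h2 : Measurable fun p : ℝ × (Fin n → ℝ) => F E p.2 :=
      (hFmeas E hE).comp measurable_snd
    have ha : MeasurableSet {p : ℝ × (Fin n → ℝ) | ENNReal.ofReal (2 * |p.1|) ≤ F E p.2} :=
      measurableSet_le ((measurable_fst.abs.const_mul 2).ennreal_ofReal) h2
    have hb : MeasurableSet {p : ℝ × (Fin n → ℝ) | 0 < F E p.2} :=
      measurableSet_lt measurable_const h2
    exact ha.inter hb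
  have hsub : ∀ E, Spos E ⊆ SC E := by
    intro E p hp
    exact ⟨nonempty_of_measure_ne_zero hp.2.ne', hp.1⟩
  have hcover : ∀ E, SC E ⊆ Spos E ∪ ({(0:ℝ)} ×ˢ (univ : Set (Fin n → ℝ))) := by
    intro E p hp
    rcases eq_or_lt_of_le (zero_le : (0:ℝ≥0∞) ≤ F E p.2) with h0 | h0
    · right
      have h1 : (2 : ℝ) * |p.1| ≤ 0 := by
        have := hp.2
        rw [← h0, le_zero_iff, ENNReal.ofReal_eq_zero] at this
        exact this
      have : p.1 = 0 := by
        have := abs_nonneg p.1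
        nlinarith [abs_eq_zero.mp (le_antisymm (by linarith) (abs_nonneg p.1))]
      exact ⟨this, trivial⟩
    · exact Or.inl ⟨hp.2, h0⟩
  have hincl : SC C ∆ SC D ⊆ (Spos C ∆ Spos D) ∪ ({(0:ℝ)} ×ˢ (univ : Set (Fin n → ℝ))) := by
    intro p hp
    rw [Set.mem_symmDiff] at hp
    rcases hp with ⟨h1, h2⟩ | ⟨h1, h2⟩
    · rcases hcover C h1 with h | h
      · exact Or.inl (Set.mem_symmDiff.mpr (Or.inl ⟨h, fun h' => h2 (hsub D h')⟩))
      · exact Or.inr h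
    · rcases hcover D h1 with h | h
      · exact Or.inl (Set.mem_symmDiff.mpr (Or.inr ⟨h, fun h' => h2 (hsub C h')⟩))
      · exact Or.inr h
  have hnull : volume ({(0:ℝ)} ×ˢ (univ : Set (Fin n → ℝ))) = 0 := by
    rw [Measure.volume_eq_prod, Measure.prod_prod, Real.volume_singleton, zero_mul]
  calc volume (SC C ∆ SC D)
      ≤ volume ((Spos C ∆ Spos D) ∪ ({(0:ℝ)} ×ˢ (univ : Set (Fin n → ℝ)))) :=
        measure_mono hincl
    _ ≤ volume (Spos C ∆ Spos D) + volume ({(0:ℝ)} ×ˢ (univ : Set (Fin n → ℝ))) :=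
        measure_union_le _ _
    _ = volume (Spos C ∆ Spos D) := by rw [hnull, add_zero]
    _ ≤ volume (C ∆ D) := by
        rw [Measure.volume_eq_prod,
          Measure.prod_apply_symm ((hSposMeas C hC).symmDiff (hSposMeas D hD)),
          Measure.prod_apply_symm (hC.symmDiff hD)]
        refine lintegral_mono fun y => ?_
        have hslice : ∀ E, (fun x : ℝ => (x, y)) ⁻¹' Spos E =
            {s : ℝ | ENNReal.ofReal (2 * |s|) ≤ F E y ∧ 0 < F E y} := fun E => rfl
        rw [Set.preimage_symmDiff, hslice C, hslice D, Set.preimage_symmDiff]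
        refine (steiner_J_symmDiff (F C y) (F D y)).trans ?_
        have h1 : F C y - F D y ≤ volume (((fun x : ℝ => (x, y)) ⁻¹' C) \
            ((fun x : ℝ => (x, y)) ⁻¹' D)) := steiner_vol_sub_le _ _
        have h2 : F D y - F C y ≤ volume (((fun x : ℝ => (x, y)) ⁻¹' D) \
            ((fun x : ℝ => (x, y)) ⁻¹' C)) := steiner_vol_sub_le _ _
        rw [Set.symmDiff_def,
          measure_union disjoint_sdiff_sdiff
            ((hD.preimage measurable_prodMk_right).diff (hC.preimage measurable_prodMk_right))]
        exact add_le_add h1 h2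

end SteinerAux

/-- The Steiner symmetral of `A` in direction `u`: the union over points `x` of the
hyperplane `u^⊥` of the closed segment on the line `l_u + x` centered at `x` whose length
is the one-dimensional outer Lebesgue measure of `A ∩ (l_u + x)` (empty if that
intersection is empty). -/
noncomputable def steinerSymmetral (d : ℕ) (u : EuclideanSpace ℝ (Fin d))
    (A : Set (EuclideanSpace ℝ (Fin d))) : Set (EuclideanSpace ℝ (Fin d)) :=
  {z | {t : ℝ | (z - (inner ℝ z u : ℝ) • u) + t • u ∈ A}.Nonempty ∧
    ENNReal.ofReal (2 * |(inner ℝ z u : ℝ)|) ≤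
      volume {t : ℝ | (z - (inner ℝ z u : ℝ) • u) + t • u ∈ A}}

/-- Steiner symmetrization is 1-Lipschitz for the Nikodym distance:
`λ_d(S_uA △ S_uB) ≤ λ_d(A △ B)` for all bounded measurable `A, B`. -/
theorem steinerSymmetral_lipschitz (d : ℕ) (u : EuclideanSpace ℝ (Fin d)) (hu : ‖u‖ = 1)
    (A B : Set (EuclideanSpace ℝ (Fin d)))
    (hA : MeasurableSet A) (hB : MeasurableSet B)
    (hAb : Bornology.IsBounded A) (hBb : Bornology.IsBounded B) :
    volume (steinerSymmetral d u A ∆ steinerSymmetral d u B) ≤ volume (A ∆ B) := by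
  have hd : d ≠ 0 := by
    rintro rfl
    rw [Subsingleton.elim u 0, norm_zero] at hu
    exact one_ne_zero hu.symm
  obtain ⟨n, rfl⟩ := Nat.exists_eq_succ_of_ne_zero hd
  -- an orthonormal basis whose 0-th vector is `u`
  have hcard : Module.finrank ℝ (EuclideanSpace ℝ (Fin (n + 1)))
      = Fintype.card (Fin (n + 1)) := by simp
  have horth : Orthonormal ℝ (({0} : Set (Fin (n + 1))).restrict fun _ => u) := by
    refine ⟨fun i => hu, fun i j hij => absurd (Subtype.ext ?_) hij⟩
    have hi : (i : Fin (n + 1)) = 0 := i.2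
    have hj : (j : Fin (n + 1)) = 0 := j.2
    rw [hi, hj]
  obtain ⟨b, hb⟩ := horth.exists_orthonormalBasis_extension_of_card_eq hcard
  have hb0 : b 0 = u := hb 0 rfl
  -- the measure-preserving measurable equivalence to the product model `ℝ × ℝⁿ`
  let Φ : EuclideanSpace ℝ (Fin (n + 1)) ≃ᵐ (ℝ × (Fin n → ℝ)) :=
    b.measurableEquiv.trans ((MeasurableEquiv.toLp 2 (Fin (n + 1) → ℝ)).symm.trans
      (MeasurableEquiv.piFinSuccAbove (fun _ => ℝ) 0))
  have hΦmp : MeasurePreserving Φ volume volume :=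
    ((volume_preserving_piFinSuccAbove (fun _ : Fin (n + 1) => ℝ) 0).comp
      (EuclideanSpace.volume_preserving_symm_measurableEquiv_toLp (Fin (n + 1)))).comp
      b.measurePreserving_measurableEquiv
  have hΦfst : ∀ z : EuclideanSpace ℝ (Fin (n + 1)), (Φ z).1 = (inner ℝ z u : ℝ) := by
    intro z
    show b.repr z 0 = _
    rw [b.repr_apply_apply, hb0, real_inner_comm]
  have hΦsnd : ∀ z : EuclideanSpace ℝ (Fin (n + 1)),
      (Φ z).2 = fun j => b.repr z ((0 : Fin (n + 1)).succAbove j) := fun z => rfl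
  have huu : (inner ℝ u u : ℝ) = 1 := by
    rw [real_inner_self_eq_norm_sq, hu]; norm_num
  have hΦline : ∀ (z : EuclideanSpace ℝ (Fin (n + 1))) (t : ℝ),
      Φ ((z - (inner ℝ z u : ℝ) • u) + t • u) = (t, (Φ z).2) := by
    intro z t
    refine Prod.ext ?_ ?_
    · rw [hΦfst, inner_add_left, inner_sub_left, real_inner_smul_left, real_inner_smul_left, huu]
      ring
    · rw [hΦsnd, hΦsnd]
      funext j
      have hne : (0 : Fin (n + 1)).succAbove j ≠ 0 := Fin.succAbove_ne 0 j
      simp [map_add, map_sub, _root_.map_smul, ← hb0, b.repr_self, EuclideanSpace.single_apply,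
        hne, Fin.succ_ne_zero j, PiLp.add_apply, PiLp.sub_apply, PiLp.smul_apply]
  -- the set identity relating the Steiner symmetral to the product model
  have hkey : ∀ A : Set (EuclideanSpace ℝ (Fin (n + 1))),
      steinerSymmetral (n + 1) u A = Φ ⁻¹' {p : ℝ × (Fin n → ℝ) |
        {t : ℝ | (t, p.2) ∈ Φ '' A}.Nonempty ∧
          ENNReal.ofReal (2 * |p.1|) ≤ volume {t : ℝ | (t, p.2) ∈ Φ '' A}} := by
    intro A
    ext z
    have hfib : {t : ℝ | (z - (inner ℝ z u : ℝ) • u) + t • u ∈ A}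
        = {t : ℝ | (t, (Φ z).2) ∈ Φ '' A} := by
      ext t
      rw [Set.mem_setOf_eq, Set.mem_setOf_eq, ← hΦline z t,
        Φ.injective.mem_set_image]
    simp only [steinerSymmetral, Set.mem_setOf_eq, Set.mem_preimage, hfib, hΦfst]
  have hA' : MeasurableSet (Φ '' A) := Φ.measurableEmbedding.measurableSet_image' hA
  have hB' : MeasurableSet (Φ '' B) := Φ.measurableEmbedding.measurableSet_image' hB
  calc volume (steinerSymmetral (n + 1) u A ∆ steinerSymmetral (n + 1) u B)
      = volume (Φ ⁻¹' ({p : ℝ × (Fin n → ℝ) | {t : ℝ | (t, p.2) ∈ Φ '' A}.Nonempty ∧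
          ENNReal.ofReal (2 * |p.1|) ≤ volume {t : ℝ | (t, p.2) ∈ Φ '' A}} ∆
        {p : ℝ × (Fin n → ℝ) | {t : ℝ | (t, p.2) ∈ Φ '' B}.Nonempty ∧
          ENNReal.ofReal (2 * |p.1|) ≤ volume {t : ℝ | (t, p.2) ∈ Φ '' B}})) := by
        rw [hkey A, hkey B, Set.preimage_symmDiff]
    _ = volume ({p : ℝ × (Fin n → ℝ) | {t : ℝ | (t, p.2) ∈ Φ '' A}.Nonempty ∧
          ENNReal.ofReal (2 * |p.1|) ≤ volume {t : ℝ | (t, p.2) ∈ Φ '' A}} ∆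
        {p : ℝ × (Fin n → ℝ) | {t : ℝ | (t, p.2) ∈ Φ '' B}.Nonempty ∧
          ENNReal.ofReal (2 * |p.1|) ≤ volume {t : ℝ | (t, p.2) ∈ Φ '' B}}) :=
        hΦmp.measure_preimage_equiv _
    _ ≤ volume ((Φ '' A) ∆ (Φ '' B)) := steiner_prod_le _ _ hA' hB'
    _ = volume (Φ '' (A ∆ B)) := by rw [Set.image_symmDiff Φ.injective]
    _ = volume (A ∆ B) := by
        rw [Φ.image_eq_preimage_symm]
        exact (hΦmp.symm Φ).measure_preimage_equiv _
end

section
/- If A ⊆ ℝ^d is a measurable set with λ_d(A) = κ_d that is essentially different from the closed unit ball B(o,1) (i.e. λ_d(A △ B(o,1)) > 0), then μ(A) > μ_d; in other words, the unit ball is the unique minimizer (up to null sets) of the moment of inertia among measurable sets of measure κ_d. -/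
open MeasureTheory Metric Filter
open scoped symmDiff ENNReal

/-- The (central) moment of inertia `μ(A) = ∫_A ‖z‖² dλ_d(z)`, as an extended real number
(it may be `+∞` for sets of finite measure). -/
noncomputable def inertiaE (d : ℕ) (A : Set (EuclideanSpace ℝ (Fin d))) : ℝ≥0∞ :=
  ∫⁻ z in A, ENNReal.ofReal (‖z‖ ^ 2)

/-- The unit ball is the unique (up to null sets) minimizer of the moment of inertia
among measurable sets of measure `κ_d`: if `λ_d(A) = κ_d` and `A` is essentially
different from `B(o,1)`, then `μ(A) > μ_d`. -/
theorem inertia_gt_of_essentially_different (d : ℕ)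
    (A : Set (EuclideanSpace ℝ (Fin d))) (hA : MeasurableSet A)
    (hvol : volume A = volume (closedBall (0 : EuclideanSpace ℝ (Fin d)) 1))
    (hdiff : 0 < volume (A ∆ closedBall (0 : EuclideanSpace ℝ (Fin d)) 1)) :
    inertiaE d (closedBall (0 : EuclideanSpace ℝ (Fin d)) 1) < inertiaE d A := by
  set B := closedBall (0 : EuclideanSpace ℝ (Fin d)) 1 with hBdef
  have hBm : MeasurableSet B := measurableSet_closedBall
  set f : EuclideanSpace ℝ (Fin d) → ℝ≥0∞ := fun z => ENNReal.ofReal (‖z‖ ^ 2) with hfdef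
  have hf : Measurable f := (measurable_norm.pow_const 2).ennreal_ofReal
  have hBfin : volume B ≠ ⊤ := measure_closedBall_lt_top.ne
  have hABfin : volume (A ∩ B) ≠ ⊤ :=
    ne_top_of_le_ne_top hBfin (measure_mono Set.inter_subset_right)
  -- equal volumes of the two differences
  have h1 : volume (A ∩ B) + volume (A \ B) = volume A := measure_inter_add_diff A hBm
  have h2 : volume (B ∩ A) + volume (B \ A) = volume B := measure_inter_add_diff B hA
  have hsym : volume (A \ B) = volume (B \ A) := by
    have h : volume (A ∩ B) + volume (A \ B) = volume (A ∩ B) + volume (B \ A) := by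
      rw [h1, hvol, ← h2, Set.inter_comm]
    exact (ENNReal.add_right_inj hABfin).mp h
  have hpos : 0 < volume (A \ B) := by
    by_contra h
    push_neg at h
    have h0 : volume (A \ B) = 0 := le_antisymm h zero_le
    have h0' : volume (B \ A) = 0 := hsym ▸ h0
    have hle : volume (A ∆ B) ≤ 0 := by
      rw [Set.symmDiff_def]
      refine le_trans (measure_union_le _ _) ?_
      rw [h0, h0']; simp
    exact absurd (le_antisymm hle zero_le) hdiff.ne'
  -- norm bound on A \ B
  have hnorm : ∀ z ∈ A \ B, (1 : ℝ) < ‖z‖ := by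
    intro z hz
    have : z ∉ B := hz.2
    simpa [hBdef, mem_closedBall, dist_eq_norm, not_le] using this
  -- strict lower bound on A \ B
  have key : volume (A \ B) < ∫⁻ z in A \ B, f z := by
    set g : EuclideanSpace ℝ (Fin d) → ℝ≥0∞ := fun z => ENNReal.ofReal (‖z‖ ^ 2 - 1) with hgdef
    have hg : Measurable g := ((measurable_norm.pow_const 2).sub measurable_const).ennreal_ofReal
    have heq : ∫⁻ z in A \ B, f z = ∫⁻ z in A \ B, (g z + 1) := by
      refine setLIntegral_congr_fun (hA.diff hBm) ?_
      intro z hz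
      have h1z : (1 : ℝ) ≤ ‖z‖ ^ 2 := by nlinarith [hnorm z hz, norm_nonneg z]
      simp only [hfdef, hgdef]
      rw [← ENNReal.ofReal_one, ← ENNReal.ofReal_add (by linarith) zero_le_one]
      ring_nf
    have hsum : ∫⁻ z in A \ B, (g z + 1) = (∫⁻ z in A \ B, g z) + volume (A \ B) := by
      rw [lintegral_add_right _ measurable_const, setLIntegral_one]
    have hgpos : 0 < ∫⁻ z in A \ B, g z := by
      rw [lintegral_pos_iff_support hg]
      have hsub : A \ B ⊆ Function.support g := by
        intro z hz
        have h1z : (1 : ℝ) < ‖z‖ ^ 2 := by nlinarith [hnorm z hz, norm_nonneg z]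
        simp only [hgdef, Function.mem_support, ne_eq, ENNReal.ofReal_eq_zero, not_le]
        linarith
      have hsuppm : MeasurableSet (Function.support g) := hg (measurableSet_singleton 0).compl
      rw [Measure.restrict_apply hsuppm, Set.inter_eq_self_of_subset_right hsub]
      exact hpos
    rw [heq, hsum]
    have hABfin' : volume (A \ B) ≠ ⊤ :=
      ne_top_of_le_ne_top (hvol ▸ hBfin) (measure_mono Set.diff_subset)
    exact lt_of_lt_of_le (ENNReal.lt_add_right hABfin' hgpos.ne')
      (le_of_eq (add_comm _ _))
  -- upper bound on B \ A
  have hupper : ∫⁻ z in B \ A, f z ≤ volume (B \ A) := by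
    calc ∫⁻ z in B \ A, f z ≤ ∫⁻ _ in B \ A, 1 := by
          refine setLIntegral_mono' (hBm.diff hA) ?_
          intro z hz
          have : ‖z‖ ≤ 1 := by simpa [hBdef, mem_closedBall, dist_eq_norm] using hz.1
          simp only [hfdef]
          rw [← ENNReal.ofReal_one]
          exact ENNReal.ofReal_le_ofReal (by nlinarith [norm_nonneg z])
      _ = volume (B \ A) := setLIntegral_one _
  -- finiteness of the common part
  have hinterfin : (∫⁻ z in A ∩ B, f z) ≠ ⊤ := by
    have : ∫⁻ z in A ∩ B, f z ≤ volume (A ∩ B) := by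
      calc ∫⁻ z in A ∩ B, f z ≤ ∫⁻ _ in A ∩ B, 1 := by
            refine setLIntegral_mono' (hA.inter hBm) ?_
            intro z hz
            have : ‖z‖ ≤ 1 := by simpa [hBdef, mem_closedBall, dist_eq_norm] using hz.2
            simp only [hfdef]
            rw [← ENNReal.ofReal_one]
            exact ENNReal.ofReal_le_ofReal (by nlinarith [norm_nonneg z])
        _ = volume (A ∩ B) := setLIntegral_one _
    exact ne_top_of_le_ne_top hABfin this
  have hsplitA : (∫⁻ z in A ∩ B, f z) + (∫⁻ z in A \ B, f z) = ∫⁻ z in A, f z :=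
    lintegral_inter_add_diff f A hBm
  have hsplitB : (∫⁻ z in B ∩ A, f z) + (∫⁻ z in B \ A, f z) = ∫⁻ z in B, f z :=
    lintegral_inter_add_diff f B hA
  have hfinal : ∫⁻ z in B, f z < ∫⁻ z in A, f z := by
    rw [← hsplitA, ← hsplitB, Set.inter_comm B A]
    calc (∫⁻ z in A ∩ B, f z) + (∫⁻ z in B \ A, f z)
        ≤ (∫⁻ z in A ∩ B, f z) + volume (B \ A) := add_le_add_right hupper _
      _ = (∫⁻ z in A ∩ B, f z) + volume (A \ B) := by rw [hsym]
      _ < (∫⁻ z in A ∩ B, f z) + ∫⁻ z in A \ B, f z :=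
          ENNReal.add_lt_add_left hinterfin key
  simpa [inertiaE, hfdef] using hfinal
end
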